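/- (Commutation of the vertical endomorphism with the total time derivative; Proposition 5.2 in the coordinate model.) Let λ be a 1-form of order k. Then S(d_Tλ) − d_T(Sλ) = λ as 1-forms of order k+1; componentwise, for every A ∈ J_{k+1} and every 0 ≤ r ≤ k+1: (S(d_Tλ))(A)_r − (d_T(Sλ))(A)_r = λ(Ā)_r (interpreting λ(Ā)_{k+1} := 0). -/

import Mathlib

/-!
Since `S` shifts components down by one and multiplies by the new index, `S(d_Tλ)_r` is
`(r+1)·(D_T λ_{(r+1)} + λ(Ā)_r)`, while `d_T(Sλ)_r` is `D_T((r+1)·λ_{(r+1)}) + r·λ(Ā)_r`.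
The total time derivative is linear under constant scalars, so the `D_T` terms cancel and
`(r+1)·λ(Ā)_r − r·λ(Ā)_r = λ(Ā)_r` remains.
-/

noncomputable section

/-- Partial Fréchet derivative in slot `r` of a map defined on `Fin m → E`,
as a continuous linear map (zero junk value for `r ≥ m`). -/
def pd {m : ℕ} {E W : Type*} [NormedAddCommGroup E] [NormedSpace ℝ E]
    [NormedAddCommGroup W] [NormedSpace ℝ W]
    (F : (Fin m → E) → W) (r : ℕ) (A : Fin m → E) : E →L[ℝ] W :=
  if h : r < m then
    (fderiv ℝ F A).comp
      (ContinuousLinearMap.pi (Pi.single (⟨r, h⟩ : Fin m) (ContinuousLinearMap.id ℝ E)))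
  else 0

/-- The space of `k`-jets `J_k = (ℝ^n)^{k+1}`, slots indexed `0,…,k`. -/
abbrev Jet (n k : ℕ) := Fin (k + 1) → EuclideanSpace ℝ (Fin n)

/-- A `1`-form of order `k` in the coordinate model: a map from `J_k` to the
`(k+1)`-tuples of linear functionals on `ℝ^n`. -/
abbrev OneForm (n k : ℕ) := Jet n k → Fin (k + 1) → (EuclideanSpace ℝ (Fin n) →L[ℝ] ℝ)

/-- Truncation of a jet to lower order. -/
def trunc {n k m : ℕ} (h : m ≤ k) (A : Jet n k) : Jet n m := fun i => A ⟨i, by omega⟩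

/-- The `r`-th component of a 1-form at a jet, with the convention that components of
index `> k` are zero. -/
def comp' {n k : ℕ} (lam : OneForm n k) (A : Jet n k) (r : ℕ) :
    EuclideanSpace ℝ (Fin n) →L[ℝ] ℝ :=
  if h : r < k + 1 then lam A ⟨r, h⟩ else 0

/-- The `r`-th component at a (possibly higher-order) jet of a 1-form of order `m`,
regarded as a 1-form of any order `k ≥ m` by precomposing with truncation. -/
def compAt {n k m : ℕ} (lam : OneForm n m) (A : Jet n k) (r : ℕ) :
    EuclideanSpace ℝ (Fin n) →L[ℝ] ℝ :=
  if h : m ≤ k then comp' lam (trunc h A) r else 0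

/-- The vertical endomorphism: `(Sλ)(A)_r = (r+1) ⬝ λ(A)_{r+1}`. -/
def VS {n k : ℕ} (lam : OneForm n k) : OneForm n k :=
  fun A r => (((r : ℕ) + 1 : ℕ) : ℝ) • comp' lam A ((r : ℕ) + 1)

/-- The total time derivative of a map `F : J_k → W`:
`D_T F (A) = ∑_{j=0}^{k} ∂_j F(Ā)(A_{j+1})`. -/
def DT {n k : ℕ} {W : Type*} [NormedAddCommGroup W] [NormedSpace ℝ W]
    (F : Jet n k → W) (A : Jet n (k + 1)) : W :=
  ∑ j : Fin (k + 1), pd F j (trunc (Nat.le_succ k) A) (A j.succ)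

/-- The total time derivative of a 1-form of order `k`:
`(d_Tλ)(A)_r = D_T(λ_{(r)})(A) + λ(Ā)_{r-1}`, with `λ(Ā)_{-1} := 0`. -/
def dT {n k : ℕ} (lam : OneForm n k) : OneForm n (k + 1) :=
  fun A r =>
    DT (fun B => comp' lam B r) A +
      match (r : ℕ) with
      | 0 => 0
      | (s + 1) => comp' lam (trunc (Nat.le_succ k) A) s

/-- Iterated total time derivative of a 1-form. -/
def dTiter {n k : ℕ} : (j : ℕ) → OneForm n k → OneForm n (k + j)
  | 0, lam => lam
  | (j + 1), lam => dT (dTiter j lam)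

end

noncomputable section

section PartialDerivative

variable {m : ℕ} {E W : Type*} [NormedAddCommGroup E] [NormedSpace ℝ E]
  [NormedAddCommGroup W] [NormedSpace ℝ W]

lemma pd_const_smul (c : ℝ) (F : (Fin m → E) → W) (r : ℕ) (A : Fin m → E) :
    pd (c • F) r A = c • pd F r A := by
  unfold pd
  split
  · rw [fderiv_const_smul_field]
    rfl
  · simp

lemma pd_const (w : W) (r : ℕ) (A : Fin m → E) : pd (fun _ => w) r A = 0 := by
  unfold pd
  split <;> simp

end PartialDerivative

section TotalDerivative

variable {n k : ℕ} {W : Type*} [NormedAddCommGroup W] [NormedSpace ℝ W]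

lemma DT_const_smul (c : ℝ) (F : Jet n k → W) (A : Jet n (k + 1)) :
    DT (c • F) A = c • DT F A := by
  simp [DT, pd_const_smul, Finset.smul_sum]

lemma DT_const (w : W) (A : Jet n (k + 1)) : DT (fun _ : Jet n k => w) A = 0 := by
  simp [DT, pd_const]

end TotalDerivative

section OneForm

variable {n k : ℕ}

lemma comp'_eq_zero_of_lt (lam : OneForm n k) (B : Jet n k) {r : ℕ} (hr : k < r) :
    comp' lam B r = 0 :=
  dif_neg (by omega)

lemma comp'_VS (lam : OneForm n k) (B : Jet n k) (r : ℕ) :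
    comp' (VS lam) B r = ((r : ℝ) + 1) • comp' lam B (r + 1) := by
  by_cases hr : r < k + 1
  · simp [comp', VS, hr]
  · simp [comp'_eq_zero_of_lt _ _ (show k < r by omega),
      comp'_eq_zero_of_lt _ _ (show k < r + 1 by omega)]

lemma comp'_dT_zero (lam : OneForm n k) (A : Jet n (k + 1)) :
    comp' (dT lam) A 0 = DT (fun B => comp' lam B 0) A := by
  simp [comp', dT]

lemma comp'_dT_succ (lam : OneForm n k) (A : Jet n (k + 1)) (r : ℕ) :
    comp' (dT lam) A (r + 1) =
      DT (fun B => comp' lam B (r + 1)) A + comp' lam (trunc (Nat.le_succ k) A) r := by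
  by_cases hr : r + 1 < k + 2
  · simp [comp', dT, hr]
  · have hzero : (fun B => comp' lam B (r + 1)) = fun _ => 0 :=
      funext fun B => comp'_eq_zero_of_lt lam B (by omega)
    rw [comp'_eq_zero_of_lt _ _ (by omega), hzero, DT_const,
      comp'_eq_zero_of_lt _ _ (by omega), add_zero]

lemma comp'_VS_dT (lam : OneForm n k) (A : Jet n (k + 1)) (r : ℕ) :
    comp' (VS (dT lam)) A r =
      ((r : ℝ) + 1) • (DT (fun B => comp' lam B (r + 1)) A
        + comp' lam (trunc (Nat.le_succ k) A) r) := by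
  rw [comp'_VS, comp'_dT_succ]

lemma comp'_dT_VS (lam : OneForm n k) (A : Jet n (k + 1)) (r : ℕ) :
    comp' (dT (VS lam)) A r =
      ((r : ℝ) + 1) • DT (fun B => comp' lam B (r + 1)) A
        + (r : ℝ) • comp' lam (trunc (Nat.le_succ k) A) r := by
  have hS : (fun B => comp' (VS lam) B r) = ((r : ℝ) + 1) • fun B => comp' lam B (r + 1) :=
    funext fun B => comp'_VS lam B r
  cases r with
  | zero => simp [comp'_dT_zero, hS]
  | succ s => rw [comp'_dT_succ, hS, DT_const_smul, comp'_VS]; push_cast; rfl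

end OneForm

theorem vertical_endomorphism_commutation_general (n k : ℕ) (lam : OneForm n k) :
    ∀ A : Jet n (k + 1), ∀ r : ℕ, r ≤ k + 1 →
      comp' (VS (dT lam)) A r - comp' (dT (VS lam)) A r =
        comp' lam (trunc (Nat.le_succ k) A) r := by
  intro A r _
  rw [comp'_VS_dT, comp'_dT_VS]
  module

/-- **Commutation of the vertical endomorphism with the total time derivative**
(Proposition 5.2 of the paper, in the coordinate model): for a smooth 1-form `λ` of
order `k`, `S(d_Tλ) − d_T(Sλ) = λ` as 1-forms of order `k+1`, componentwise
`(S(d_Tλ))(A)_r − (d_T(Sλ))(A)_r = λ(Ā)_r` (with `λ(Ā)_{k+1} := 0`). -/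
theorem vertical_endomorphism_commutation (n k : ℕ) (hn : 1 ≤ n)
    (lam : OneForm n k) (hlam : ContDiff ℝ (⊤ : ℕ∞) lam) :
    ∀ A : Jet n (k + 1), ∀ r : ℕ, r ≤ k + 1 →
      comp' (VS (dT lam)) A r - comp' (dT (VS lam)) A r =
        comp' lam (trunc (Nat.le_succ k) A) r :=
  vertical_endomorphism_commutation_general n k lam

end
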